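/- arXiv:1003.4306 — 3 statements merged into one kernel-verified Lean document; each statement's English description precedes it below -/
import Mathlib

section
/- Let ξ be a standard normal random variable, let S be a real random variable independent of ξ with E[e^S] < ∞, and let c ≠ 0 be a real constant. Then E[ ξ · min(1, e^{S − c ξ}) ] = −c · e^{c²/2} · E[ e^S · Φ( −S/|c| − |c| ) ], where Φ denotes the cumulative distribution function of the standard normal distribution. -/
/-!
By independence and Fubini, the left side is the integral, against the law of `S`, of
`I(s) = E[ξ min(1, e^{s - cξ})]`, so everything reduces to computing `I(s)`; the symmetry
`ξ ↦ -ξ` reduces further to `c > 0`. Split at `t = s / c`. On `{ξ ≤ t}` the minimum is `1`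
and `∫_{-∞}^t x φ(x) dx = -φ(t)`. On `{ξ > t}` completing the square,
`e^{s - cx} φ(x) = e^{s + c²/2} φ(x + c)`, shifts the integral to
`e^{s + c²/2} ∫_{t+c}^∞ (y - c) φ(y) dy = e^{s + c²/2} (φ(t + c) - c Φ(-(t + c)))`,
and `e^{s + c²/2} φ(t + c) = φ(t)` cancels the contribution of `{ξ ≤ t}`.
-/

open MeasureTheory ProbabilityTheory

/-- Φ, the CDF of the standard normal distribution N(0,1). -/
noncomputable def stdGaussianCDF (x : ℝ) : ℝ :=
  ProbabilityTheory.cdf (ProbabilityTheory.gaussianReal 0 1) x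

open Real Set Filter Topology

local notation "φ" => gaussianPDFReal 0 1

lemma stdGaussianPDF_apply (x : ℝ) : φ x = (√(2 * π))⁻¹ * exp (-x ^ 2 / 2) := by
  simp [gaussianPDFReal]

lemma stdGaussianPDF_neg (x : ℝ) : φ (-x) = φ x := by
  simp [stdGaussianPDF_apply]

lemma hasDerivAt_stdGaussianPDF (x : ℝ) : HasDerivAt φ (-(x * φ x)) x := by
  have h : HasDerivAt (fun y : ℝ => -y ^ 2 / 2) (-x) x :=
    (((hasDerivAt_pow 2 x).fun_neg).div_const 2).congr_deriv (by ring)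
  rw [show φ = fun y => (√(2 * π))⁻¹ * exp (-y ^ 2 / 2) from funext stdGaussianPDF_apply]
  exact ((h.exp).const_mul _).congr_deriv (by ring)

lemma integrable_mul_stdGaussianPDF : Integrable fun x => x * φ x := by
  convert (integrable_mul_exp_neg_mul_sq (b := 1 / 2) (by norm_num)).const_mul (√(2 * π))⁻¹
    using 2 with x
  rw [stdGaussianPDF_apply]
  ring_nf

lemma tendsto_stdGaussianPDF_atTop : Tendsto φ atTop (𝓝 0) :=
  tendsto_zero_of_hasDerivAt_of_integrableOn_Ioi (a := 0)
    (fun x _ => hasDerivAt_stdGaussianPDF x) integrable_mul_stdGaussianPDF.fun_neg.integrableOn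
    (integrable_gaussianPDFReal 0 1).integrableOn

lemma tendsto_stdGaussianPDF_atBot : Tendsto φ atBot (𝓝 0) :=
  tendsto_zero_of_hasDerivAt_of_integrableOn_Iic (a := 0)
    (fun x _ => hasDerivAt_stdGaussianPDF x) integrable_mul_stdGaussianPDF.fun_neg.integrableOn
    (integrable_gaussianPDFReal 0 1).integrableOn

lemma setIntegral_Iic_mul_stdGaussianPDF (t : ℝ) : ∫ x in Iic t, x * φ x = -φ t := by
  simpa using integral_Iic_of_hasDerivAt_of_tendsto' (a := t)
    (fun x _ => (hasDerivAt_stdGaussianPDF x).neg.congr_deriv (neg_neg _))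
    integrable_mul_stdGaussianPDF.integrableOn tendsto_stdGaussianPDF_atBot.neg

lemma setIntegral_Ioi_mul_stdGaussianPDF (t : ℝ) : ∫ x in Ioi t, x * φ x = φ t := by
  simpa using integral_Ioi_of_hasDerivAt_of_tendsto' (a := t)
    (fun x _ => (hasDerivAt_stdGaussianPDF x).neg.congr_deriv (neg_neg _))
    integrable_mul_stdGaussianPDF.integrableOn tendsto_stdGaussianPDF_atTop.neg

lemma stdGaussianCDF_eq_setIntegral (t : ℝ) : stdGaussianCDF t = ∫ x in Iic t, φ x := by
  rw [stdGaussianCDF, cdf_eq_real, measureReal_def, gaussianReal_apply_eq_integral 0 one_ne_zero,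
    ENNReal.toReal_ofReal
      (setIntegral_nonneg measurableSet_Iic fun x _ => gaussianPDFReal_nonneg 0 1 x)]

lemma stdGaussianCDF_neg (t : ℝ) : stdGaussianCDF (-t) = ∫ x in Ioi t, φ x := by
  rw [stdGaussianCDF_eq_setIntegral, ← integral_comp_neg_Ioi]
  simp only [stdGaussianPDF_neg]

@[fun_prop]
lemma measurable_stdGaussianCDF : Measurable stdGaussianCDF :=
  (monotone_cdf _).measurable

lemma exp_sub_mul_mul_stdGaussianPDF (s c x : ℝ) :
    exp (s - c * x) * φ x = exp (s + c ^ 2 / 2) * φ (x + c) := by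
  simp only [stdGaussianPDF_apply]
  rw [mul_left_comm, ← exp_add, mul_left_comm, ← exp_add]
  ring_nf

lemma setIntegral_Ioi_comp_add_right {E : Type*} [NormedAddCommGroup E] [NormedSpace ℝ E]
    (f : ℝ → E) (t c : ℝ) : ∫ x in Ioi t, f (x + c) = ∫ x in Ioi (t + c), f x := by
  simpa using (measurePreserving_add_right volume c).setIntegral_preimage_emb
    (measurableEmbedding_addRight c) f (Ioi (t + c))

lemma abs_mul_min_one_exp_le (x u : ℝ) : |x * min 1 (exp u)| ≤ |x| := by
  rw [abs_mul, abs_of_nonneg (le_min zero_le_one (exp_pos u).le)]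
  exact mul_le_of_le_one_right (abs_nonneg x) (min_le_left _ _)

lemma integral_comp_neg_gaussianReal {E : Type*} [NormedAddCommGroup E] [NormedSpace ℝ E]
    (v : NNReal) (f : ℝ → E) :
    ∫ x, f (-x) ∂gaussianReal 0 v = ∫ x, f x ∂gaussianReal 0 v := by
  have h := (Homeomorph.neg ℝ).measurableEmbedding.integral_map (μ := gaussianReal 0 v) f
  simpa [gaussianReal_map_neg] using h.symm

lemma integral_mul_min_one_exp_gaussianReal_of_pos (s : ℝ) {c : ℝ} (hc : 0 < c) :
    ∫ x, x * min 1 (exp (s - c * x)) ∂gaussianReal 0 1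
      = -c * exp (c ^ 2 / 2) * (exp s * stdGaussianCDF (-s / c - c)) := by
  set t := s / c
  have hs : s = c * t := (mul_div_cancel₀ s hc.ne').symm
  have hint : Integrable fun x => φ x • (x * min 1 (exp (s - c * x))) := by
    refine integrable_mul_stdGaussianPDF.mono (by fun_prop) (ae_of_all _ fun x => ?_)
    rw [norm_smul, mul_comm x (φ x), norm_mul (φ x)]
    exact mul_le_mul_of_nonneg_left (abs_mul_min_one_exp_le _ _) (norm_nonneg _)
  have hIic : ∀ x ∈ Iic t, φ x • (x * min 1 (exp (s - c * x))) = x * φ x := by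
    intro x hx
    have hexp : 0 ≤ s - c * x := by rw [hs, ← mul_sub]; exact mul_nonneg hc.le (sub_nonneg.2 hx)
    rw [min_eq_left (one_le_exp hexp), smul_eq_mul]; ring
  have hIoi : ∀ x ∈ Ioi t,
      φ x • (x * min 1 (exp (s - c * x))) = exp (s + c ^ 2 / 2) * (x * φ (x + c)) := by
    intro x hx
    have hexp : s - c * x ≤ 0 := by
      rw [hs, ← mul_sub]; exact mul_nonpos_of_nonneg_of_nonpos hc.le (sub_nonpos.2 hx.le)
    rw [min_eq_right (exp_le_one_iff.2 hexp), smul_eq_mul, mul_left_comm, mul_comm (φ x),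
      exp_sub_mul_mul_stdGaussianPDF]
    ring
  have hshift : ∫ x in Ioi t, x * φ (x + c) = φ (t + c) - c * stdGaussianCDF (-(t + c)) := by
    have hsub := setIntegral_Ioi_comp_add_right (fun y => (y - c) * φ y) t c
    simp only [add_sub_cancel_right] at hsub
    rw [hsub, stdGaussianCDF_neg, ← setIntegral_Ioi_mul_stdGaussianPDF, ← integral_const_mul,
      ← integral_sub integrable_mul_stdGaussianPDF.integrableOn
        ((integrable_gaussianPDFReal 0 1).const_mul c).integrableOn]
    simp_rw [sub_mul]
  have hpdf : exp (s + c ^ 2 / 2) * φ (t + c) = φ t := by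
    rw [← exp_sub_mul_mul_stdGaussianPDF, hs, sub_self, exp_zero, one_mul]
  rw [integral_gaussianReal_eq_integral_smul one_ne_zero,
    ← intervalIntegral.integral_Iic_add_Ioi (b := t) hint.integrableOn hint.integrableOn,
    setIntegral_congr_fun measurableSet_Iic hIic, setIntegral_congr_fun measurableSet_Ioi hIoi,
    integral_const_mul, setIntegral_Iic_mul_stdGaussianPDF, hshift, mul_sub, hpdf, exp_add]
  rw [show -s / c - c = -(t + c) by ring]
  ring

lemma integral_mul_min_one_exp_gaussianReal (s : ℝ) {c : ℝ} (hc : c ≠ 0) :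
    ∫ x, x * min 1 (exp (s - c * x)) ∂gaussianReal 0 1
      = -c * exp (c ^ 2 / 2) * (exp s * stdGaussianCDF (-s / |c| - |c|)) := by
  rcases hc.lt_or_gt with hneg | hpos
  · have hflip (x : ℝ) : -x * min 1 (exp (s - c * -x)) = -(x * min 1 (exp (s - -c * x))) := by
      ring_nf
    rw [← integral_comp_neg_gaussianReal, funext hflip, integral_neg,
      integral_mul_min_one_exp_gaussianReal_of_pos s (neg_pos.2 hneg), abs_of_neg hneg, neg_sq]
    ring
  · rw [integral_mul_min_one_exp_gaussianReal_of_pos s hpos, abs_of_pos hpos]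

lemma integrable_fst_mul_min_one_exp {μ ν : Measure ℝ} [IsFiniteMeasure ν]
    (hμ : Integrable (fun x => x) μ) (c : ℝ) :
    Integrable (fun p : ℝ × ℝ => p.1 * min 1 (exp (p.2 - c * p.1))) (μ.prod ν) :=
  (hμ.abs.comp_fst ν).mono' (by fun_prop) (ae_of_all _ fun _ => abs_mul_min_one_exp_le _ _)

lemma ProbabilityTheory.IndepFun.integral_comp_prod_eq_integral_integral {Ω α β E : Type*}
    [MeasurableSpace Ω] [MeasurableSpace α] [MeasurableSpace β]
    [NormedAddCommGroup E] [NormedSpace ℝ E]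
    {P : Measure Ω} [IsFiniteMeasure P] {X : Ω → α} {Y : Ω → β}
    (hX : AEMeasurable X P) (hY : AEMeasurable Y P) (hXY : IndepFun X Y P) {f : α × β → E}
    (hf : Integrable f ((P.map X).prod (P.map Y))) :
    ∫ ω, f (X ω, Y ω) ∂P = ∫ y, ∫ x, f (x, y) ∂P.map X ∂P.map Y := by
  have hmap := hXY.map_prod_eq_prod_map_map hX hY
  rw [← integral_prod_symm f hf, ← hmap,
    integral_map (hX.prodMk hY) (hmap ▸ hf.aestronglyMeasurable)]

theorem stmt_14_general {Ω : Type*} [MeasurableSpace Ω] (P : Measure Ω) [IsProbabilityMeasure P]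
    (ξ S : Ω → ℝ) (hξmeas : Measurable ξ) (hSmeas : Measurable S)
    (hξlaw : P.map ξ = gaussianReal 0 1)
    (hindep : IndepFun ξ S P)
    (c : ℝ) (hc : c ≠ 0) :
    ∫ ω, ξ ω * min 1 (Real.exp (S ω - c * ξ ω)) ∂P
      = -c * Real.exp (c ^ 2 / 2) *
          ∫ ω, Real.exp (S ω) * stdGaussianCDF (-(S ω) / |c| - |c|) ∂P := by
  have hF : Integrable (fun p : ℝ × ℝ => p.1 * min 1 (exp (p.2 - c * p.1)))
      ((P.map ξ).prod (P.map S)) := by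
    rw [hξlaw]
    exact integrable_fst_mul_min_one_exp ((memLp_id_gaussianReal 1).integrable le_rfl) c
  rw [hindep.integral_comp_prod_eq_integral_integral hξmeas.aemeasurable hSmeas.aemeasurable hF,
    hξlaw]
  simp_rw [integral_mul_min_one_exp_gaussianReal _ hc]
  rw [integral_const_mul, integral_map hSmeas.aemeasurable (by fun_prop)]

/-- A conditional version of Lemma `lem:magic`, Equation `lem:normmo`
(as used in Lemma `lem:do2`): if `ξ ~ N(0,1)`, `S` is independent of `ξ`
with `E[e^S] < ∞`, and `c ≠ 0`, then
`E[ξ (1 ∧ e^{S − cξ})] = −c e^{c²/2} E[e^S Φ(−S/|c| − |c|)]`. -/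
theorem stmt_14 {Ω : Type*} [MeasurableSpace Ω] (P : Measure Ω) [IsProbabilityMeasure P]
    (ξ S : Ω → ℝ) (hξmeas : Measurable ξ) (hSmeas : Measurable S)
    (hξlaw : P.map ξ = gaussianReal 0 1)
    (hindep : IndepFun ξ S P)
    (hS : Integrable (fun ω => Real.exp (S ω)) P)
    (c : ℝ) (hc : c ≠ 0) :
    ∫ ω, ξ ω * min 1 (Real.exp (S ω - c * ξ ω)) ∂P
      = -c * Real.exp (c ^ 2 / 2) *
          ∫ ω, Real.exp (S ω) * stdGaussianCDF (-(S ω) / |c| - |c|) ∂P :=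
  stmt_14_general P ξ S hξmeas hSmeas hξlaw hindep c hc
end

section
/- Let M₀ > 0. There exists a constant M > 0, depending only on ℓ and M₀, such that the following holds for every N ∈ ℕ, every ζ ∈ ℝ^N, all indices 1 ≤ i, j ≤ N, and all λ_i, λ_j > 0: if Q is a real random variable (measurable with respect to ξ) satisfying E[|Q − R_{ij}(ζ,ξ)|²] ≤ (M₀/N)(1 + ζ_i² + ζ_j²), then | E[ λ_i ξ_i · λ_j ξ_j · min(1, e^{Q}) ] − λ_i λ_j δ_{ij} E[ min(1, e^{R_{ij}(ζ,ξ)}) ] | ≤ M λ_i λ_j (1 + ζ_i² + ζ_j²)^{1/2} N^{-1/2}, where δ_{ij} = 1 if i = j and 0 otherwise. -/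
/-! Since `R_{ij}` does not involve `ξ_i` or `ξ_j`, independence of the coordinates gives
`E[ξ_i ξ_j (1 ∧ e^{R_{ij}})] = δ_{ij} E[1 ∧ e^{R_{ij}}]`. What remains is
`E[ξ_i ξ_j ((1 ∧ e^Q) − (1 ∧ e^{R_{ij}}))]`; as `x ↦ 1 ∧ e^x` is 1-Lipschitz, Cauchy–Schwarz bounds it
by `‖ξ_i ξ_j‖₂ ‖Q − R_{ij}‖₂ ≤ √(E ξ⁴) · √(M₀/N · (1 + ζ_i² + ζ_j²))`. -/

open MeasureTheory ProbabilityTheory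

/-- The joint law of `N` i.i.d. standard normal random variables `ξ = (ξ₁,…,ξ_N)`. -/
noncomputable def gaussPi (N : ℕ) : Measure (Fin N → ℝ) :=
  Measure.pi fun _ => ProbabilityTheory.gaussianReal 0 1

/-- `R(ζ,ξ) = −√(2ℓ²/N) Σ_j ζ_j ξ_j − (ℓ²/N) Σ_j ξ_j²`. -/
noncomputable def Rfun (ℓ : ℝ) (N : ℕ) (ζ ξ : Fin N → ℝ) : ℝ :=
  -Real.sqrt (2 * ℓ ^ 2 / N) * ∑ j, ζ j * ξ j - ℓ ^ 2 / N * ∑ j, ξ j ^ 2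

/-- `R_i(ζ,ξ) = −√(2ℓ²/N) Σ_{j≠i} ζ_j ξ_j − (ℓ²/N) Σ_{j≠i} ξ_j²`. -/
noncomputable def Rifun (ℓ : ℝ) (N : ℕ) (ζ ξ : Fin N → ℝ) (i : Fin N) : ℝ :=
  -Real.sqrt (2 * ℓ ^ 2 / N) * ∑ j ∈ Finset.univ.erase i, ζ j * ξ j
    - ℓ ^ 2 / N * ∑ j ∈ Finset.univ.erase i, ξ j ^ 2

/-- `R_{ij}(ζ,ξ) = −√(2ℓ²/N) Σ_{k∉{i,j}} ζ_k ξ_k − (ℓ²/N) Σ_{k∉{i,j}} ξ_k²`. -/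
noncomputable def Rijfun (ℓ : ℝ) (N : ℕ) (ζ ξ : Fin N → ℝ) (i j : Fin N) : ℝ :=
  -Real.sqrt (2 * ℓ ^ 2 / N) * ∑ k ∈ (Finset.univ.erase i).erase j, ζ k * ξ k
    - ℓ ^ 2 / N * ∑ k ∈ (Finset.univ.erase i).erase j, ξ k ^ 2

theorem Real.abs_exp_sub_exp_le_of_nonpos {x y : ℝ} (hx : x ≤ 0) (hy : y ≤ 0) :
    |Real.exp x - Real.exp y| ≤ |x - y| := by
  wlog hyx : y ≤ x generalizing x y
  · rw [abs_sub_comm, abs_sub_comm x]; exact this hy hx (le_of_not_ge hyx)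
  have hexp : Real.exp y = Real.exp x * Real.exp (y - x) := by rw [← Real.exp_add]; ring_nf
  have hlin := Real.add_one_le_exp (y - x)
  have hxle : Real.exp x ≤ 1 := Real.exp_le_one_iff.2 hx
  have hyle : Real.exp (y - x) ≤ 1 := Real.exp_le_one_iff.2 (by linarith)
  rw [abs_of_nonneg (by linarith [Real.exp_le_exp.2 hyx]), abs_of_nonneg (by linarith)]
  nlinarith [Real.exp_pos x]

theorem abs_min_one_exp_sub_min_one_exp_le (a b : ℝ) :
    |min 1 (Real.exp a) - min 1 (Real.exp b)| ≤ |a - b| := by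
  have hmin : ∀ c, min 1 (Real.exp c) = Real.exp (min 0 c) := fun c => by
    rw [← Real.exp_zero, Real.exp_monotone.map_min, Real.exp_zero]
  rw [hmin, hmin]
  refine (Real.abs_exp_sub_exp_le_of_nonpos (min_le_left _ _) (min_le_left _ _)).trans ?_
  simpa using abs_min_sub_min_le_max 0 a 0 b

theorem abs_integral_mul_le_of_lintegral_sq_le {Ω : Type*} [MeasurableSpace Ω] {μ : Measure Ω}
    {f g : Ω → ℝ} (hf : AEMeasurable f μ) (hg : AEMeasurable g μ) {A B : ℝ}
    (hA : ∫⁻ ω, ENNReal.ofReal (f ω ^ 2) ∂μ ≤ ENNReal.ofReal A)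
    (hB : ∫⁻ ω, ENNReal.ofReal (g ω ^ 2) ∂μ ≤ ENNReal.ofReal B) :
    |∫ ω, f ω * g ω ∂μ| ≤ Real.sqrt A * Real.sqrt B := by
  have hsq : ∀ h : Ω → ℝ, ∀ ω, ENNReal.ofReal |h ω| ^ (2 : ℝ) = ENNReal.ofReal (h ω ^ 2) :=
    fun h ω => by
      rw [ENNReal.ofReal_rpow_of_nonneg (abs_nonneg _) zero_le_two, Real.rpow_two, sq_abs]
  have hsqrt : ∀ C : ℝ, ENNReal.ofReal C ^ (1 / 2 : ℝ) = ENNReal.ofReal (Real.sqrt C) := by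
    intro C
    rcases le_total 0 C with hC | hC
    · rw [ENNReal.ofReal_rpow_of_nonneg hC (by norm_num), Real.sqrt_eq_rpow]
    · rw [ENNReal.ofReal_of_nonpos hC, Real.sqrt_eq_zero'.2 hC, ENNReal.ofReal_zero,
        ENNReal.zero_rpow_of_pos (by norm_num)]
  have holder := ENNReal.lintegral_mul_le_Lp_mul_Lq μ Real.HolderConjugate.two_two
    hf.abs.ennreal_ofReal hg.abs.ennreal_ofReal
  simp only [Pi.mul_apply, hsq] at holder
  have hbound : ∫⁻ ω, ENNReal.ofReal |f ω * g ω| ∂μ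
      ≤ ENNReal.ofReal (Real.sqrt A * Real.sqrt B) := by
    calc ∫⁻ ω, ENNReal.ofReal |f ω * g ω| ∂μ
        = ∫⁻ ω, ENNReal.ofReal |f ω| * ENNReal.ofReal |g ω| ∂μ := by
          simp only [abs_mul, ENNReal.ofReal_mul (abs_nonneg _)]
      _ ≤ ENNReal.ofReal A ^ (1 / 2 : ℝ) * ENNReal.ofReal B ^ (1 / 2 : ℝ) :=
          holder.trans (by gcongr)
      _ = ENNReal.ofReal (Real.sqrt A * Real.sqrt B) := by
          rw [hsqrt, hsqrt, ENNReal.ofReal_mul (Real.sqrt_nonneg _)]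
  calc |∫ ω, f ω * g ω ∂μ| ≤ ∫ ω, |f ω * g ω| ∂μ := abs_integral_le_integral_abs
    _ = (∫⁻ ω, ENNReal.ofReal |f ω * g ω| ∂μ).toReal :=
        integral_eq_lintegral_of_nonneg_ae (.of_forall fun _ => abs_nonneg _)
          (hf.mul hg).abs.aestronglyMeasurable
    _ ≤ Real.sqrt A * Real.sqrt B :=
        ENNReal.toReal_le_of_le_ofReal (by positivity) hbound

section

variable {ι : Type*} [Fintype ι] {μ : ι → Measure ℝ} [∀ i, IsProbabilityMeasure (μ i)]

theorem indepFun_eval_of_forall_ne_eq [DecidableEq ι] (i : ι) {g : (ι → ℝ) → ℝ}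
    (hg : Measurable g) (hdep : ∀ ξ η : ι → ℝ, (∀ k ≠ i, ξ k = η k) → g ξ = g η) :
    IndepFun (fun ξ => ξ i) g (Measure.pi μ) := by
  have hind := (iIndepFun_pi (X := fun _ (x : ℝ) => x) (μ := μ)
    fun _ => aemeasurable_id).indepFun_finset {i} (Finset.univ.erase i)
      (by simp) fun k => measurable_pi_apply k
  let G : (Finset.univ.erase i → ℝ) → ℝ := fun y =>
    g fun k => if h : k ∈ Finset.univ.erase i then y ⟨k, h⟩ else 0
  have hG : Measurable G := hg.comp <| measurable_pi_lambda _ fun k => by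
    split_ifs <;> fun_prop
  have hgG : g = G ∘ fun ξ (k : Finset.univ.erase i) => ξ k := by
    funext ξ
    exact hdep _ _ fun k hk => by simp [hk]
  rw [hgG]
  exact hind.comp (measurable_pi_apply (⟨i, Finset.mem_singleton_self i⟩ : ({i} : Finset ι))) hG

theorem integral_eval_mul_eval_mul_eq [DecidableEq ι] (hmean : ∀ k, ∫ x, x ∂μ k = 0)
    (hsq : ∀ k, ∫ x, x ^ 2 ∂μ k = 1) (i j : ι) {g : (ι → ℝ) → ℝ} (hg : Measurable g)
    (hdep : ∀ ξ η : ι → ℝ, (∀ k, k ≠ i → k ≠ j → ξ k = η k) → g ξ = g η) :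
    ∫ ξ, ξ i * ξ j * g ξ ∂Measure.pi μ = (if i = j then 1 else 0) * ∫ ξ, g ξ ∂Measure.pi μ := by
  by_cases hij : i = j
  · subst hij
    have hind := (indepFun_eval_of_forall_ne_eq (μ := μ) i hg fun ξ η h =>
      hdep ξ η fun k hk _ => h k hk).comp (measurable_id.pow_const 2) measurable_id
    have hfactor : ∫ ξ, ξ i ^ 2 * g ξ ∂Measure.pi μ
        = (∫ ξ, ξ i ^ 2 ∂Measure.pi μ) * ∫ ξ, g ξ ∂Measure.pi μ :=
      hind.integral_mul_eq_mul_integral ((measurable_pi_apply i).pow_const 2).aestronglyMeasurable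
        hg.aestronglyMeasurable
    simp only [← sq, if_pos, one_mul]
    rw [hfactor, integral_comp_eval (f := fun x => x ^ 2) (by fun_prop), hsq, one_mul]
  · have hind := indepFun_eval_of_forall_ne_eq (μ := μ) i (g := fun ξ => ξ j * g ξ)
      ((measurable_pi_apply j).mul hg) fun ξ η h => by
        rw [h j (Ne.symm hij), hdep ξ η fun k hk _ => h k hk]
    have hfactor := hind.integral_mul_eq_mul_integral (measurable_pi_apply i).aestronglyMeasurable
      ((measurable_pi_apply j).mul hg).aestronglyMeasurable
    simp only [Pi.mul_apply] at hfactor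
    simp only [mul_assoc, hfactor, integral_eval, hmean, zero_mul, if_neg hij]

theorem lintegral_sq_eval_mul_eval_le (h4 : ∀ k, Integrable (fun x => x ^ 4) (μ k)) (i j : ι) :
    ∫⁻ ξ, ENNReal.ofReal ((ξ i * ξ j) ^ 2) ∂Measure.pi μ
      ≤ ENNReal.ofReal ((∫ x, x ^ 4 ∂μ i + ∫ x, x ^ 4 ∂μ j) / 2) := by
  have hint4 : ∀ k, Integrable (fun ξ : ι → ℝ => ξ k ^ 4) (Measure.pi μ) := fun k =>
    integrable_comp_eval (f := fun x => x ^ 4) (h4 k)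
  have hint : Integrable (fun ξ : ι → ℝ => (ξ i ^ 4 + ξ j ^ 4) / 2) (Measure.pi μ) :=
    (hint4 i |>.add (hint4 j)).div_const 2
  calc ∫⁻ ξ, ENNReal.ofReal ((ξ i * ξ j) ^ 2) ∂Measure.pi μ
      ≤ ∫⁻ ξ, ENNReal.ofReal ((ξ i ^ 4 + ξ j ^ 4) / 2) ∂Measure.pi μ :=
        lintegral_mono fun ξ => ENNReal.ofReal_le_ofReal <| by
          nlinarith [sq_nonneg (ξ i ^ 2 - ξ j ^ 2)]
    _ = ENNReal.ofReal (∫ ξ, (ξ i ^ 4 + ξ j ^ 4) / 2 ∂Measure.pi μ) :=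
        (ofReal_integral_eq_lintegral_ofReal hint (.of_forall fun ξ => by positivity)).symm
    _ = ENNReal.ofReal ((∫ x, x ^ 4 ∂μ i + ∫ x, x ^ 4 ∂μ j) / 2) := by
        rw [integral_div, integral_add (hint4 i) (hint4 j),
          integral_comp_eval (f := fun x => x ^ 4) (by fun_prop),
          integral_comp_eval (f := fun x => x ^ 4) (by fun_prop)]

theorem integrable_eval_mul_eval_mul (h2 : ∀ k, MemLp id 2 (μ k)) (i j : ι)
    {m : (ι → ℝ) → ℝ} (hm : AEStronglyMeasurable m (Measure.pi μ)) {C : ℝ}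
    (hC : ∀ ξ, ‖m ξ‖ ≤ C) :
    Integrable (fun ξ => ξ i * ξ j * m ξ) (Measure.pi μ) := by
  have hL2 : ∀ k, MemLp (fun ξ : ι → ℝ => ξ k) 2 (Measure.pi μ) := fun k =>
    (h2 k).comp_measurePreserving (measurePreserving_eval μ k)
  simpa only [Pi.mul_apply, mul_comm (m _)] using
    ((hL2 i).integrable_mul (hL2 j)).bdd_mul hm (.of_forall hC)

theorem abs_integral_eval_mul_eval_mul_min_one_exp_sub_le [DecidableEq ι] {ν : Measure ℝ}
    [IsProbabilityMeasure ν] (hmean : ∫ x, x ∂ν = 0) (hsq : ∫ x, x ^ 2 ∂ν = 1)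
    (h2 : MemLp id 2 ν) (h4 : Integrable (fun x => x ^ 4) ν) (i j : ι)
    {Q R : (ι → ℝ) → ℝ} (hQ : Measurable Q) (hR : Measurable R)
    (hdep : ∀ ξ η : ι → ℝ, (∀ k, k ≠ i → k ≠ j → ξ k = η k) → R ξ = R η) {B : ℝ}
    (hQR : ∫⁻ ξ, ENNReal.ofReal ((Q ξ - R ξ) ^ 2) ∂Measure.pi (fun _ => ν) ≤ ENNReal.ofReal B) :
    |∫ ξ, ξ i * ξ j * min 1 (Real.exp (Q ξ)) ∂Measure.pi (fun _ => ν)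
        - (if i = j then 1 else 0) * ∫ ξ, min 1 (Real.exp (R ξ)) ∂Measure.pi (fun _ => ν)|
      ≤ Real.sqrt (∫ x, x ^ 4 ∂ν) * Real.sqrt B := by
  have hint : ∀ {F : (ι → ℝ) → ℝ}, Measurable F →
      Integrable (fun ξ => ξ i * ξ j * min 1 (Real.exp (F ξ))) (Measure.pi fun _ => ν) :=
    fun hF => integrable_eval_mul_eval_mul (fun _ => h2) i j
      (measurable_const.min hF.exp).aestronglyMeasurable (C := 1) fun ξ => by
        rw [Real.norm_of_nonneg (by positivity)]; exact min_le_left _ _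
  rw [← integral_eval_mul_eval_mul_eq (fun _ => hmean) (fun _ => hsq) i j
    (measurable_const.min hR.exp) fun ξ η h => by rw [hdep ξ η h],
    ← integral_sub (hint hQ) (hint hR)]
  simp only [← mul_sub]
  refine abs_integral_mul_le_of_lintegral_sq_le (by fun_prop) (by fun_prop)
    ((lintegral_sq_eval_mul_eval_le (fun _ => h4) i j).trans_eq (by rw [add_self_div_two]))
    ((lintegral_mono fun ξ => ENNReal.ofReal_le_ofReal ?_).trans hQR)
  rw [← sq_abs, ← sq_abs (Q ξ - _)]
  exact pow_le_pow_left₀ (abs_nonneg _) (abs_min_one_exp_sub_min_one_exp_le _ _) 2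

end

theorem integral_sq_gaussianReal (m : ℝ) (v : NNReal) :
    ∫ x, x ^ 2 ∂gaussianReal m v = v + m ^ 2 := by
  have h := variance_eq_sub (memLp_id_gaussianReal' (μ := m) (v := v) 2 (by simp))
  simp only [variance_id_gaussianReal, Pi.pow_apply, id, integral_id_gaussianReal] at h
  linarith

theorem integrable_pow_gaussianReal (m : ℝ) (v : NNReal) (n : ℕ) :
    Integrable (fun x => x ^ n) (gaussianReal m v) :=
  ((memLp_id_gaussianReal n).integrable_norm_pow').mono' (by fun_prop)
    (.of_forall fun x => norm_pow_le x n)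

theorem measurable_Rijfun (ℓ : ℝ) (N : ℕ) (ζ : Fin N → ℝ) (i j : Fin N) :
    Measurable fun ξ => Rijfun ℓ N ζ ξ i j := by
  unfold Rijfun; fun_prop

theorem Rijfun_congr {ℓ : ℝ} {N : ℕ} {ζ ξ η : Fin N → ℝ} {i j : Fin N}
    (h : ∀ k, k ≠ i → k ≠ j → ξ k = η k) : Rijfun ℓ N ζ ξ i j = Rijfun ℓ N ζ η i j := by
  have hsum : ∀ f : ℝ → ℝ → ℝ, ∑ k ∈ (Finset.univ.erase i).erase j, f (ζ k) (ξ k)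
      = ∑ k ∈ (Finset.univ.erase i).erase j, f (ζ k) (η k) := fun f =>
    Finset.sum_congr rfl fun k hk => by
      simp only [Finset.mem_erase] at hk
      rw [h k hk.2.1 hk.1]
  unfold Rijfun
  rw [hsum fun z x => z * x, hsum fun _ x => x ^ 2]

theorem stmt_16_general (ℓ : ℝ) (M₀ : ℝ) :
    ∃ M : ℝ, 0 < M ∧
      ∀ N : ℕ, 0 < N → ∀ ζ : Fin N → ℝ, ∀ i j : Fin N, ∀ li lj : ℝ,
        0 < li → 0 < lj → ∀ Q : (Fin N → ℝ) → ℝ, Measurable Q →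
          (∫⁻ ξ, ENNReal.ofReal ((Q ξ - Rijfun ℓ N ζ ξ i j) ^ 2) ∂gaussPi N
            ≤ ENNReal.ofReal (M₀ / N * (1 + ζ i ^ 2 + ζ j ^ 2))) →
          |(∫ ξ, (li * ξ i) * (lj * ξ j) * min 1 (Real.exp (Q ξ)) ∂gaussPi N) -
              li * lj * (if i = j then (1 : ℝ) else 0) *
                ∫ ξ, min 1 (Real.exp (Rijfun ℓ N ζ ξ i j)) ∂gaussPi N|
            ≤ M * li * lj * Real.sqrt (1 + ζ i ^ 2 + ζ j ^ 2) / Real.sqrt N := by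
  set m₄ := ∫ x, x ^ 4 ∂gaussianReal 0 1
  refine ⟨Real.sqrt m₄ * Real.sqrt M₀ + 1, by positivity, ?_⟩
  intro N _ ζ i j li lj hli hlj Q hQ hQR
  set S := 1 + ζ i ^ 2 + ζ j ^ 2
  have hbound := abs_integral_eval_mul_eval_mul_min_one_exp_sub_le integral_id_gaussianReal
    (by simp [integral_sq_gaussianReal]) (memLp_id_gaussianReal' 2 (by simp))
    (integrable_pow_gaussianReal 0 1 4) i j hQ (measurable_Rijfun ℓ N ζ i j)
    (fun _ _ h => Rijfun_congr h) hQR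
  have hscale : ∫ ξ, (li * ξ i) * (lj * ξ j) * min 1 (Real.exp (Q ξ)) ∂gaussPi N
      = li * lj * ∫ ξ, ξ i * ξ j * min 1 (Real.exp (Q ξ)) ∂gaussPi N := by
    rw [← integral_const_mul]; congr 1 with ξ; ring
  calc _ = li * lj * |∫ ξ, ξ i * ξ j * min 1 (Real.exp (Q ξ)) ∂gaussPi N
          - (if i = j then 1 else 0) * ∫ ξ, min 1 (Real.exp (Rijfun ℓ N ζ ξ i j)) ∂gaussPi N| := by
        rw [hscale, mul_assoc (li * lj), ← mul_sub, abs_mul, abs_of_pos (mul_pos hli hlj)]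
    _ ≤ li * lj * (Real.sqrt m₄ * Real.sqrt (M₀ / N * S)) := by gcongr; exact hbound
    _ = Real.sqrt m₄ * Real.sqrt M₀ * li * lj * Real.sqrt S / Real.sqrt N := by
        rw [Real.sqrt_mul' _ (by positivity), Real.sqrt_div' _ (by positivity)]; ring
    _ ≤ _ := by gcongr; linarith

/-- Lemma `lem:drifvar`, bound `eqn:rhoij` on the error `θ_{ij}`: there is a
constant `M > 0` depending only on `ℓ` and `M₀` such that for all `N`,
`ζ ∈ ℝ^N`, indices `i, j`, weights `λ_i, λ_j > 0` and any random variable `Q`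
(a measurable function of `ξ`) with `E[|Q − R_{ij}(ζ,ξ)|²] ≤ (M₀/N)(1 + ζ_i² + ζ_j²)`,
`|E[λ_i ξ_i λ_j ξ_j (1 ∧ e^Q)] − λ_i λ_j δ_{ij} E[1 ∧ e^{R_{ij}}]|
  ≤ M λ_i λ_j (1 + ζ_i² + ζ_j²)^{1/2} N^{-1/2}`. -/
theorem stmt_16 (ℓ : ℝ) (hℓ : 0 < ℓ) (M₀ : ℝ) (hM₀ : 0 < M₀) :
    ∃ M : ℝ, 0 < M ∧
      ∀ N : ℕ, 0 < N → ∀ ζ : Fin N → ℝ, ∀ i j : Fin N, ∀ li lj : ℝ,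
        0 < li → 0 < lj → ∀ Q : (Fin N → ℝ) → ℝ, Measurable Q →
          (∫⁻ ξ, ENNReal.ofReal ((Q ξ - Rijfun ℓ N ζ ξ i j) ^ 2) ∂gaussPi N
            ≤ ENNReal.ofReal (M₀ / N * (1 + ζ i ^ 2 + ζ j ^ 2))) →
          |(∫ ξ, (li * ξ i) * (lj * ξ j) * min 1 (Real.exp (Q ξ)) ∂gaussPi N) -
              li * lj * (if i = j then (1 : ℝ) else 0) *
                ∫ ξ, min 1 (Real.exp (Rijfun ℓ N ζ ξ i j)) ∂gaussPi N|
            ≤ M * li * lj * Real.sqrt (1 + ζ i ^ 2 + ζ j ^ 2) / Real.sqrt N :=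
  stmt_16_general ℓ M₀
end

section
/- There exists a constant M > 0, depending only on ℓ, such that for every N ∈ ℕ, every ζ ∈ ℝ^N and every index 1 ≤ i ≤ N: E[ 1 / (1 + √N |R_i(ζ,ξ)|) ] ≤ M (1 + |ζ_i|) · ( E[ 1 / (1 + √N |R(ζ,ξ)|)² ] )^{1/2}. -/
open MeasureTheory ProbabilityTheory

/-! Splitting off the `i`-th summand, `R = R_i + D(ξ_i)` with
`√N |D(x)| ≤ √(2ℓ²) |ζ_i| |x| + ℓ² x²` uniformly in `N ≥ 1`. Hence pointwise
`1 / (1 + √N |R_i|) ≤ (1 + |ζ_i|) w(ξ_i) / (1 + √N |R|)` with `w(x) = 1 + √(2ℓ²) |x| + ℓ² x²`,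
and Cauchy–Schwarz gives the claim with `M = ‖w‖_{L²(N(0,1))}`, which is finite because the
Gaussian has moments of all orders. -/

open scoped ENNReal NNReal

lemma one_div_one_add_le_mul_one_div_one_add {a b c : ℝ} (ha : 0 ≤ a) (hb : 0 ≤ b) (hc : 0 ≤ c)
    (hcab : c ≤ a + b) : 1 / (1 + a) ≤ (1 + b) * (1 / (1 + c)) := by
  rw [mul_one_div, div_le_div_iff₀ (by positivity) (by positivity)]
  nlinarith [mul_nonneg ha hb]

lemma memLp_one_div_one_add_mul_abs {α : Type*} [MeasurableSpace α] {μ : Measure α}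
    [IsFiniteMeasure μ] {u : α → ℝ} (hu : Measurable u) {c : ℝ} (hc : 0 ≤ c) (p : ℝ≥0∞) :
    MemLp (fun x => 1 / (1 + c * |u x|)) p μ := by
  refine MemLp.of_bound (by fun_prop : Measurable _).aestronglyMeasurable 1
    (ae_of_all _ fun x => ?_)
  rw [Real.norm_of_nonneg (by positivity), div_le_one (by positivity)]
  nlinarith [abs_nonneg (u x)]

lemma integral_mul_le_sqrt_integral_sq_mul_sqrt_integral_sq {α : Type*} [MeasurableSpace α]
    {μ : Measure α} {f g : α → ℝ} (hf_nonneg : 0 ≤ᵐ[μ] f) (hg_nonneg : 0 ≤ᵐ[μ] g)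
    (hf : MemLp f 2 μ) (hg : MemLp g 2 μ) :
    ∫ a, f a * g a ∂μ ≤ √(∫ a, f a ^ 2 ∂μ) * √(∫ a, g a ^ 2 ∂μ) := by
  have h := integral_mul_le_Lp_mul_Lq_of_nonneg Real.HolderConjugate.two_two hf_nonneg hg_nonneg
    (by simpa using hf) (by simpa using hg)
  simpa only [Real.rpow_two, Real.sqrt_eq_rpow, one_div] using h

noncomputable def quadWeight (ℓ x : ℝ) : ℝ := 1 + √(2 * ℓ ^ 2) * |x| + ℓ ^ 2 * x ^ 2

lemma one_le_quadWeight (ℓ x : ℝ) : 1 ≤ quadWeight ℓ x := by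
  unfold quadWeight
  exact le_add_of_le_of_nonneg (le_add_of_nonneg_right (by positivity)) (by positivity)

@[fun_prop]
lemma measurable_quadWeight (ℓ : ℝ) : Measurable (quadWeight ℓ) := by
  unfold quadWeight; fun_prop

lemma memLp_quadWeight_gaussianReal (ℓ μ : ℝ) (v : ℝ≥0) :
    MemLp (quadWeight ℓ) 2 (gaussianReal μ v) := by
  have h_abs : MemLp (fun x : ℝ => |x|) 2 (gaussianReal μ v) :=
    (memLp_id_gaussianReal 2).norm
  have h_sq : MemLp (fun x : ℝ => x ^ 2) 2 (gaussianReal μ v) := by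
    rw [memLp_two_iff_integrable_sq (by fun_prop)]
    refine ((memLp_id_gaussianReal 4).integrable_norm_pow (by norm_num)).congr
      (ae_of_all _ fun x => ?_)
    simp only [id, Real.norm_eq_abs, Even.pow_abs (by decide : Even 4)]
    ring
  exact ((memLp_const (1 : ℝ)).add (h_abs.const_mul √(2 * ℓ ^ 2))).add (h_sq.const_mul (ℓ ^ 2))

lemma integral_quadWeight_sq_gaussianReal_pos (ℓ μ : ℝ) (v : ℝ≥0) :
    0 < ∫ x, quadWeight ℓ x ^ 2 ∂gaussianReal μ v :=
  calc (0 : ℝ) < ∫ _, 1 ∂gaussianReal μ v := by simp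
    _ ≤ ∫ x, quadWeight ℓ x ^ 2 ∂gaussianReal μ v :=
      integral_mono (integrable_const 1)
        ((memLp_two_iff_integrable_sq (by fun_prop)).mp (memLp_quadWeight_gaussianReal ℓ μ v))
        fun x => one_le_pow₀ (one_le_quadWeight ℓ x)

lemma Rfun_eq_Rifun_add (ℓ : ℝ) (N : ℕ) (ζ ξ : Fin N → ℝ) (i : Fin N) :
    Rfun ℓ N ζ ξ = Rifun ℓ N ζ ξ i + (-√(2 * ℓ ^ 2 / N) * (ζ i * ξ i) - ℓ ^ 2 / N * ξ i ^ 2) := by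
  simp only [Rfun, Rifun]
  rw [← Finset.add_sum_erase _ _ (Finset.mem_univ i),
    ← Finset.add_sum_erase _ (fun j => ξ j ^ 2) (Finset.mem_univ i)]
  ring

lemma sqrt_mul_abs_Rfun_sub_Rifun_le (ℓ : ℝ) {N : ℕ} (ζ ξ : Fin N → ℝ) (i : Fin N) :
    √N * |Rfun ℓ N ζ ξ - Rifun ℓ N ζ ξ i| ≤ √(2 * ℓ ^ 2) * (|ζ i| * |ξ i|) + ℓ ^ 2 * ξ i ^ 2 := by
  have hN : (1 : ℝ) ≤ N := Nat.one_le_cast.mpr i.pos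
  have h_lin : √N * √(2 * ℓ ^ 2 / N) = √(2 * ℓ ^ 2) := by
    rw [← Real.sqrt_mul (by positivity), mul_div_cancel₀ _ (by positivity)]
  have h_quad : √N * (ℓ ^ 2 / N) ≤ ℓ ^ 2 := by
    rw [mul_div_left_comm]
    refine mul_le_of_le_one_right (sq_nonneg ℓ) ((div_le_one (by positivity)).mpr ?_)
    exact Real.sqrt_le_self_iff.mpr (Or.inr hN)
  rw [Rfun_eq_Rifun_add ℓ N ζ ξ i, add_sub_cancel_left]
  calc √N * |-√(2 * ℓ ^ 2 / N) * (ζ i * ξ i) - ℓ ^ 2 / N * ξ i ^ 2|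
      ≤ √N * (√(2 * ℓ ^ 2 / N) * (|ζ i| * |ξ i|) + ℓ ^ 2 / N * ξ i ^ 2) := by
        gcongr
        refine (abs_sub _ _).trans_eq ?_
        simp only [abs_mul, abs_neg, abs_of_nonneg (Real.sqrt_nonneg _), abs_pow, sq_abs,
          abs_div, Nat.abs_cast]
    _ ≤ √(2 * ℓ ^ 2) * (|ζ i| * |ξ i|) + ℓ ^ 2 * ξ i ^ 2 := by
        rw [mul_add, ← mul_assoc, h_lin, ← mul_assoc (√N)]
        gcongr

lemma one_div_one_add_abs_Rifun_le (ℓ : ℝ) {N : ℕ} (ζ ξ : Fin N → ℝ) (i : Fin N) :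
    1 / (1 + √N * |Rifun ℓ N ζ ξ i|)
      ≤ (1 + |ζ i|) * (quadWeight ℓ (ξ i) * (1 / (1 + √N * |Rfun ℓ N ζ ξ|))) := by
  set b := √N * |Rfun ℓ N ζ ξ - Rifun ℓ N ζ ξ i|
  have h_tri : √N * |Rfun ℓ N ζ ξ| ≤ √N * |Rifun ℓ N ζ ξ i| + b := by
    rw [← mul_add]
    gcongr
    linarith [abs_sub_abs_le_abs_sub (Rfun ℓ N ζ ξ) (Rifun ℓ N ζ ξ i)]
  have h_weight : 1 + b ≤ (1 + |ζ i|) * quadWeight ℓ (ξ i) := by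
    have hb := sqrt_mul_abs_Rfun_sub_Rifun_le ℓ ζ ξ i
    have hlin : 0 ≤ √(2 * ℓ ^ 2) * |ξ i| := by positivity
    have hquad : 0 ≤ ℓ ^ 2 * ξ i ^ 2 := by positivity
    unfold quadWeight
    nlinarith [mul_nonneg (abs_nonneg (ζ i)) hquad, abs_nonneg (ζ i)]
  calc 1 / (1 + √N * |Rifun ℓ N ζ ξ i|) ≤ (1 + b) * (1 / (1 + √N * |Rfun ℓ N ζ ξ|)) :=
        one_div_one_add_le_mul_one_div_one_add (by positivity) (by positivity) (by positivity) h_tri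
    _ ≤ (1 + |ζ i|) * quadWeight ℓ (ξ i) * (1 / (1 + √N * |Rfun ℓ N ζ ξ|)) := by gcongr
    _ = _ := mul_assoc _ _ _

instance (N : ℕ) : IsProbabilityMeasure (gaussPi N) := by
  unfold gaussPi; infer_instance

lemma measurePreserving_eval_gaussPi {N : ℕ} (i : Fin N) :
    MeasurePreserving (Function.eval i) (gaussPi N) (gaussianReal 0 1) :=
  measurePreserving_eval _ i

theorem stmt_19_general (ℓ : ℝ) :
    ∃ M : ℝ, 0 < M ∧
      ∀ N : ℕ, 0 < N → ∀ ζ : Fin N → ℝ, ∀ i : Fin N,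
        ∫ ξ, 1 / (1 + Real.sqrt N * |Rifun ℓ N ζ ξ i|) ∂gaussPi N
          ≤ M * (1 + |ζ i|) *
              Real.sqrt (∫ ξ, 1 / (1 + Real.sqrt N * |Rfun ℓ N ζ ξ|) ^ 2 ∂gaussPi N) := by
  refine ⟨√(∫ x, quadWeight ℓ x ^ 2 ∂gaussianReal 0 1),
    Real.sqrt_pos.mpr (integral_quadWeight_sq_gaussianReal_pos ℓ 0 1), fun N _ ζ i => ?_⟩
  have hwi : MemLp (fun ξ : Fin N → ℝ => quadWeight ℓ (ξ i)) 2 (gaussPi N) :=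
    (memLp_quadWeight_gaussianReal ℓ 0 1).comp_measurePreserving (measurePreserving_eval_gaussPi i)
  have hg : MemLp (fun ξ => 1 / (1 + √N * |Rfun ℓ N ζ ξ|)) 2 (gaussPi N) :=
    memLp_one_div_one_add_mul_abs (by unfold Rfun; fun_prop) (by positivity) 2
  have hf : Integrable (fun ξ => 1 / (1 + √N * |Rifun ℓ N ζ ξ i|)) (gaussPi N) :=
    memLp_one_iff_integrable.mp
      (memLp_one_div_one_add_mul_abs (by unfold Rifun; fun_prop) (by positivity) 1)
  have hwi_sq :
      ∫ ξ, quadWeight ℓ (ξ i) ^ 2 ∂gaussPi N = ∫ x, quadWeight ℓ x ^ 2 ∂gaussianReal 0 1 := by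
    rw [← (measurePreserving_eval_gaussPi i).map_eq,
      integral_map (measurePreserving_eval_gaussPi i).measurable.aemeasurable (by fun_prop)]
  calc ∫ ξ, 1 / (1 + √N * |Rifun ℓ N ζ ξ i|) ∂gaussPi N
      ≤ ∫ ξ, (1 + |ζ i|) * (quadWeight ℓ (ξ i) * (1 / (1 + √N * |Rfun ℓ N ζ ξ|))) ∂gaussPi N :=
        integral_mono hf ((hwi.integrable_mul hg).const_mul _)
          (one_div_one_add_abs_Rifun_le ℓ ζ · i)
    _ = (1 + |ζ i|) * ∫ ξ, quadWeight ℓ (ξ i) * (1 / (1 + √N * |Rfun ℓ N ζ ξ|)) ∂gaussPi N :=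
        integral_const_mul _ _
    _ ≤ (1 + |ζ i|) * (√(∫ ξ, quadWeight ℓ (ξ i) ^ 2 ∂gaussPi N)
          * √(∫ ξ, (1 / (1 + √N * |Rfun ℓ N ζ ξ|)) ^ 2 ∂gaussPi N)) := by
        gcongr
        exact integral_mul_le_sqrt_integral_sq_mul_sqrt_integral_sq
          (ae_of_all _ fun ξ => zero_le_one.trans (one_le_quadWeight ℓ (ξ i)))
          (ae_of_all _ fun ξ => by positivity) hwi hg
    _ = _ := by
        rw [hwi_sq]
        simp only [div_pow, one_pow]
        ring

/-- Equation `eqn:errgamdo3`: there is a constant `M > 0` depending only on `ℓ`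
such that for all `N`, `ζ ∈ ℝ^N` and `1 ≤ i ≤ N`,
`E[1/(1 + √N |R_i(ζ,ξ)|)] ≤ M (1 + |ζ_i|) (E[1/(1 + √N |R(ζ,ξ)|)²])^{1/2}`. -/
theorem stmt_19 (ℓ : ℝ) (hℓ : 0 < ℓ) :
    ∃ M : ℝ, 0 < M ∧
      ∀ N : ℕ, 0 < N → ∀ ζ : Fin N → ℝ, ∀ i : Fin N,
        ∫ ξ, 1 / (1 + Real.sqrt N * |Rifun ℓ N ζ ξ i|) ∂gaussPi N
          ≤ M * (1 + |ζ i|) *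
              Real.sqrt (∫ ξ, 1 / (1 + Real.sqrt N * |Rfun ℓ N ζ ξ|) ^ 2 ∂gaussPi N) :=
  stmt_19_general ℓ
end
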